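/- arXiv:2303.10520 — 2 statements merged into one kernel-verified Lean document; each statement's English description precedes it below -/
import Mathlib

section
/- Let X, Y, Z be locally convex Hausdorff topological vector spaces and F : X ⇒ Y a multifunction whose graph is {(x,y) : A₁(x) + A₂(y) = z, ⟨x_i*, x⟩ + ⟨y_i*, y⟩ ≤ β_i, i = 1,…,m}. If A₁ is closed under finite-codimensional subspaces, then rge F = {y : ∃ x, y ∈ F(x)} is a generalized polyhedral convex set in Y. -/
/-!
Let `X₀` be the common kernel of the `xᵢ*`: it is closed and of finite codimension, so
`M = A₁ X₀` is closed, and writing `x = x₀ + ι t` with `x₀ ∈ X₀`, `t ∈ ℝᵏ` turns the condition on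
`y` into `∃ t, z - A₂ y - A₁ (ι t) ∈ M` plus finitely many affine inequalities in `(y, t)`.
Since `M` has finite codimension in the closed subspace `R = M + A₁ (ι ℝᵏ)`, Hahn–Banach yields
finitely many functionals cutting `M` out of `R`; so membership in `M` becomes `z - A₂ y ∈ R`
together with finitely many linear equations in `(y, t)`. Fourier–Motzkin elimination of `t`
leaves a closed affine subspace intersected with finitely many closed half-spaces.
-/

/-- A set is generalized polyhedral convex if it is the intersection of a closed
affine subspace with finitely many half-spaces given by continuous linear functionals. -/
def IsGPC {E : Type*} [AddCommGroup E] [Module ℝ E] [TopologicalSpace E]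
    (D : Set E) : Prop :=
  ∃ (n : ℕ) (f : Fin n → E →L[ℝ] ℝ) (α : Fin n → ℝ) (L : AffineSubspace ℝ E),
    IsClosed (L : Set E) ∧ D = {x | x ∈ L ∧ ∀ i, f i x ≤ α i}

theorem Set.Finite.exists_between_of_forall_le {α : Type*} [ConditionallyCompleteLattice α]
    [Nonempty α] {L U : Set α} (hL : L.Finite) (hU : U.Finite) (h : ∀ l ∈ L, ∀ u ∈ U, l ≤ u) :
    ∃ t, (∀ l ∈ L, l ≤ t) ∧ ∀ u ∈ U, t ≤ u := by
  rcases L.eq_empty_or_nonempty with rfl | hne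
  · obtain ⟨t, ht⟩ := hU.bddBelow
    exact ⟨t, by simp, ht⟩
  · exact ⟨sSup L, fun l hl => le_csSup hL.bddAbove hl,
      fun u hu => csSup_le hne fun l hl => h l hl u hu⟩

/- A solution `t` must lie above every `c j / e j` with `e j < 0` and below every `c i / e i`
with `e i > 0`; the pairwise conditions say exactly that these bounds are compatible. -/
theorem exists_forall_mul_le_iff {ι : Type*} [Finite ι] (e c : ι → ℝ) :
    (∃ t, ∀ i, t * e i ≤ c i) ↔
      (∀ i, e i = 0 → 0 ≤ c i) ∧ ∀ i j, 0 < e i → e j < 0 → e j * c i ≤ e i * c j := by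
  constructor
  · rintro ⟨t, ht⟩
    refine ⟨fun i hi => by simpa [hi] using ht i, fun i j hi hj => ?_⟩
    nlinarith [ht i, ht j]
  · rintro ⟨hzero, hpair⟩
    obtain ⟨t, hlow, hup⟩ := Set.Finite.exists_between_of_forall_le
      ((Set.toFinite {j | e j < 0}).image fun j => c j / e j)
      ((Set.toFinite {i | 0 < e i}).image fun i => c i / e i) (by
        rintro _ ⟨j, hj, rfl⟩ _ ⟨i, hi, rfl⟩
        rw [div_le_iff_of_neg hj, div_mul_eq_mul_div, div_le_iff₀ hi]
        linarith [hpair i j hi hj])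
    refine ⟨t, fun i => ?_⟩
    rcases lt_trichotomy (e i) 0 with hi | hi | hi
    · exact (div_le_iff_of_neg hi).mp (hlow _ ⟨i, hi, rfl⟩)
    · simpa [hi] using hzero i hi
    · exact (le_div_iff₀ hi).mp (hup _ ⟨i, hi, rfl⟩)

def IsPolyhedron {E : Type*} [AddCommGroup E] [Module ℝ E] [TopologicalSpace E]
    (P : Set E) : Prop :=
  ∃ (n : ℕ) (f : Fin n → E →L[ℝ] ℝ) (α : Fin n → ℝ), P = {x | ∀ i, f i x ≤ α i}

section Polyhedron

variable {E F : Type*} [AddCommGroup E] [Module ℝ E] [TopologicalSpace E]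
  [AddCommGroup F] [Module ℝ F] [TopologicalSpace F]

theorem isPolyhedron_setOf_forall_le {ι : Type*} [Finite ι] (f : ι → E →L[ℝ] ℝ) (α : ι → ℝ) :
    IsPolyhedron {x | ∀ i, f i x ≤ α i} := by
  obtain ⟨n, ⟨e⟩⟩ := Finite.exists_equiv_fin ι
  exact ⟨n, f ∘ e.symm, α ∘ e.symm, by ext x; simp [e.symm.forall_congr_left]⟩

theorem isPolyhedron_setOf_forall_eq {ι : Type*} [Finite ι] (f : ι → E →L[ℝ] ℝ) (α : ι → ℝ) :
    IsPolyhedron {x | ∀ i, f i x = α i} := by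
  convert isPolyhedron_setOf_forall_le (Sum.elim f (-f)) (Sum.elim α (-α)) using 1
  ext x
  simp [le_antisymm_iff, forall_and]

namespace IsPolyhedron

theorem inter {P Q : Set E} (hP : IsPolyhedron P) (hQ : IsPolyhedron Q) :
    IsPolyhedron (P ∩ Q) := by
  obtain ⟨n, f, α, rfl⟩ := hP
  obtain ⟨n', f', α', rfl⟩ := hQ
  convert isPolyhedron_setOf_forall_le (Sum.elim f f') (Sum.elim α α') using 1
  ext x
  simp

theorem preimage {P : Set E} (hP : IsPolyhedron P) (φ : F →L[ℝ] E) : IsPolyhedron (φ ⁻¹' P) := by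
  obtain ⟨n, f, α, rfl⟩ := hP
  exact ⟨n, fun i => (f i).comp φ, α, rfl⟩

theorem image_fst {P : Set (E × ℝ)} (hP : IsPolyhedron P) : IsPolyhedron (Prod.fst '' P) := by
  obtain ⟨n, f, α, rfl⟩ := hP
  set e : Fin n → ℝ := fun i => f i (0, 1)
  set g : Fin n → E →L[ℝ] ℝ := fun i => (f i).comp (.inl ℝ E ℝ)
  have hf : ∀ i x, f i x = g i x.1 + x.2 * e i := by
    intro i ⟨p, t⟩
    calc f i (p, t) = f i ((p, 0) + t • (0, 1)) := by simp
      _ = g i p + t * e i := by rw [map_add, map_smul, smul_eq_mul]; rfl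
  have hproj : ∀ p, p ∈ Prod.fst '' {x | ∀ i, f i x ≤ α i} ↔
      ∃ t, ∀ i, t * e i ≤ α i - g i p := by
    intro p
    simp only [Set.mem_image, Set.mem_ofPred_eq, hf, Prod.exists, exists_and_right,
      exists_eq_right, le_sub_iff_add_le']
  convert (isPolyhedron_setOf_forall_le (fun i : {i // e i = 0} => g i) (fun i => α i)).inter
    (isPolyhedron_setOf_forall_le
      (fun ij : {ij : Fin n × Fin n // 0 < e ij.1 ∧ e ij.2 < 0} =>
        e ij.1.1 • g ij.1.2 - e ij.1.2 • g ij.1.1)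
      (fun ij => e ij.1.1 * α ij.1.2 - e ij.1.2 * α ij.1.1)) using 1
  ext p
  rw [hproj, exists_forall_mul_le_iff]
  simp only [Set.mem_inter_iff, Set.mem_ofPred_eq, Subtype.forall, Prod.forall,
    sub_apply, smul_apply, smul_eq_mul, sub_nonneg]
  refine and_congr Iff.rfl (forall₂_congr fun i j => ⟨fun h hij => ?_, fun h hi hj => ?_⟩)
  · linarith [h hij.1 hij.2]
  · linarith [h ⟨hi, hj⟩]

theorem image_fst_pi {k : ℕ} {P : Set (E × (Fin k → ℝ))} (hP : IsPolyhedron P) :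
    IsPolyhedron (Prod.fst '' P) := by
  induction k with
  | zero =>
    convert hP.preimage (.inl ℝ E (Fin 0 → ℝ)) using 1
    ext p
    refine ⟨?_, fun hp => ⟨_, hp, rfl⟩⟩
    rintro ⟨⟨p, u⟩, hu, rfl⟩
    rwa [Subsingleton.elim u 0] at hu
  | succ k ih =>
    let φ : (E × (Fin k → ℝ)) × ℝ →L[ℝ] E × (Fin (k + 1) → ℝ) :=
      ((ContinuousLinearMap.fst ℝ E _).comp (.fst ℝ _ ℝ)).prod
        (.finCons (.snd ℝ _ ℝ) ((ContinuousLinearMap.snd ℝ E _).comp (.fst ℝ _ ℝ)))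
    have hφ : Prod.fst '' P = Prod.fst '' (Prod.fst '' (φ ⁻¹' P)) := by
      ext p
      constructor
      · rintro ⟨⟨p, w⟩, hw, rfl⟩
        refine ⟨(p, Fin.tail w), ⟨((p, Fin.tail w), w 0), ?_, rfl⟩, rfl⟩
        have : φ ((p, Fin.tail w), w 0) = (p, w) := Prod.ext rfl (Fin.cons_self_tail w)
        rwa [Set.mem_preimage, this]
      · rintro ⟨_, ⟨x, hx, rfl⟩, rfl⟩
        exact ⟨φ x, hx, rfl⟩
    rw [hφ]
    exact ih (hP.preimage φ).image_fst

theorem isGPC_inter {L : AffineSubspace ℝ E} (hL : IsClosed (L : Set E)) {P : Set E}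
    (hP : IsPolyhedron P) : IsGPC ((L : Set E) ∩ P) := by
  obtain ⟨n, f, α, rfl⟩ := hP
  exact ⟨n, f, α, L, hL, rfl⟩

end IsPolyhedron

end Polyhedron

theorem Submodule.exists_fin_linearMap_sub_mem {R M : Type*} [Ring R] [AddCommGroup M]
    [Module R M] (N : Submodule R M) [N.CoFG] :
    ∃ (k : ℕ) (ι : (Fin k → R) →ₗ[R] M), ∀ x, ∃ t, x - ι t ∈ N := by
  obtain ⟨k, f, hf⟩ := Module.Finite.exists_fin' R (M ⧸ N)
  obtain ⟨ι, hι⟩ := Module.projective_lifting_property N.mkQ f N.mkQ_surjective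
  refine ⟨k, ι, fun x => ?_⟩
  obtain ⟨t, ht⟩ := hf (N.mkQ x)
  refine ⟨t, (Submodule.Quotient.eq N).mp ?_⟩
  change N.mkQ x = (N.mkQ ∘ₗ ι) t
  rw [hι, ht]

section LocallyConvex

variable {Z : Type*} [AddCommGroup Z] [Module ℝ Z] [TopologicalSpace Z] [IsTopologicalAddGroup Z]
  [ContinuousSMul ℝ Z] [LocallyConvexSpace ℝ Z] {M : Submodule ℝ Z}

theorem Submodule.exists_dual_mem_iff_of_mem_sup_span_singleton (hM : IsClosed (M : Set Z))
    (a : Z) : ∃ φ : Z →L[ℝ] ℝ, ∀ ξ ∈ M ⊔ ℝ ∙ a, ξ ∈ M ↔ φ ξ = 0 := by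
  by_cases ha : a ∈ M
  · refine ⟨0, fun ξ hξ => iff_of_true ?_ rfl⟩
    rwa [sup_eq_left.mpr ((Submodule.span_singleton_le_iff_mem a M).mpr ha)] at hξ
  obtain ⟨f, u, hfM, hfa⟩ := geometric_hahn_banach_closed_point M.convex hM ha
  have hf : ∀ m ∈ M, f m = 0 := by
    intro m hm
    by_contra hfm
    have := hfM _ (M.smul_mem (u / f m) hm)
    rw [map_smul, smul_eq_mul, div_mul_cancel₀ u hfm] at this
    exact lt_irrefl u this
  have hfa : f a ≠ 0 := by
    have := hfM 0 M.zero_mem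
    rw [map_zero] at this
    linarith
  refine ⟨f, fun ξ hξ => ⟨hf ξ, fun hξ0 => ?_⟩⟩
  obtain ⟨m, hm, b, hb, rfl⟩ := Submodule.mem_sup.mp hξ
  obtain ⟨c, rfl⟩ := Submodule.mem_span_singleton.mp hb
  rw [map_add, hf m hm, map_smul, smul_eq_mul, zero_add, mul_eq_zero, or_iff_left hfa] at hξ0
  simpa [hξ0] using hm

theorem Submodule.exists_finset_dual_mem_iff_of_mem_sup (hM : IsClosed (M : Set Z))
    (T : Submodule ℝ Z) [FiniteDimensional ℝ T] :
    ∃ Ψ : Finset (Z →L[ℝ] ℝ), ∀ ξ ∈ M ⊔ T, ξ ∈ M ↔ ∀ ψ ∈ Ψ, ψ ξ = 0 := by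
  classical
  obtain ⟨s, rfl⟩ := (Submodule.fg_iff_finiteDimensional T).mpr ‹_›
  clear ‹FiniteDimensional ℝ _›
  induction s using Finset.induction_on generalizing M with
  | empty => exact ⟨∅, by simp⟩
  | insert a s _ ih =>
    obtain ⟨φ, hφ⟩ := M.exists_dual_mem_iff_of_mem_sup_span_singleton hM a
    obtain ⟨Ψ, hΨ⟩ := ih (M.isClosed_sup_finiteDimensional (ℝ ∙ a) hM)
    refine ⟨insert φ Ψ, fun ξ hξ => ?_⟩
    rw [Finset.coe_insert, Submodule.span_insert, ← sup_assoc] at hξ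
    rw [Finset.forall_mem_insert, ← hΨ ξ hξ]
    exact ⟨fun h => ⟨(hφ ξ (mem_sup_left h)).mp h, mem_sup_left h⟩,
      fun ⟨h0, ha⟩ => (hφ ξ ha).mpr h0⟩

theorem isGPC_setOf_exists_sub_mem {Y : Type*} [AddCommGroup Y] [Module ℝ Y]
    [TopologicalSpace Y] (hM : IsClosed (M : Set Z)) (B : Y →L[ℝ] Z) {k : ℕ}
    (C : (Fin k → ℝ) →ₗ[ℝ] Z) (z : Z) {P : Set (Y × (Fin k → ℝ))} (hP : IsPolyhedron P) :
    IsGPC {y | ∃ t, z - B y - C t ∈ M ∧ (y, t) ∈ P} := by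
  obtain ⟨Ψ, hΨ⟩ := M.exists_finset_dual_mem_iff_of_mem_sup hM (LinearMap.range C)
  set R := M ⊔ LinearMap.range C
  let L : AffineSubspace ℝ Y := (AffineSubspace.mk' z R).comap B.toLinearMap.toAffineMap
  have hLmem : ∀ y, y ∈ L ↔ z - B y ∈ R := by
    intro y
    rw [AffineSubspace.mem_comap, AffineSubspace.mem_mk', vsub_eq_sub, ← R.neg_mem_iff, neg_sub]
    rfl
  have hL : IsClosed (L : Set Y) := by
    rw [show (L : Set Y) = (fun y => z - B y) ⁻¹' R from Set.ext hLmem]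
    exact (M.isClosed_sup_finiteDimensional _ hM).preimage (continuous_const.sub B.continuous)
  let G : Y × (Fin k → ℝ) →L[ℝ] Z := B.coprod ⟨C, C.continuous_on_pi⟩
  have hQ := isPolyhedron_setOf_forall_eq (fun ψ : Ψ => (ψ : Z →L[ℝ] ℝ).comp G)
    (fun ψ => (ψ : Z →L[ℝ] ℝ) z)
  convert ((hP.inter hQ).image_fst_pi).isGPC_inter hL using 1
  ext y
  simp only [Set.mem_ofPred_eq, Set.mem_inter_iff, SetLike.mem_coe, hLmem]
  constructor
  · rintro ⟨t, hMt, hPt⟩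
    refine ⟨?_, (y, t), ⟨hPt, fun ψ => ?_⟩, rfl⟩
    · simpa using R.add_mem (Submodule.mem_sup_left hMt)
        (Submodule.mem_sup_right (LinearMap.mem_range_self C t))
    · have := (hΨ _ (Submodule.mem_sup_left hMt)).mp hMt ψ ψ.2
      simp only [ContinuousLinearMap.comp_apply, ContinuousLinearMap.coprod_apply,
        ContinuousLinearMap.coe_mk', map_add, map_sub, G] at this ⊢
      linarith
  · rintro ⟨hy, ⟨y', t⟩, ⟨hPt, hQt⟩, rfl⟩
    refine ⟨t, (hΨ _ (R.sub_mem hy (Submodule.mem_sup_right ⟨t, rfl⟩))).mpr fun ψ hψ => ?_, hPt⟩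
    have := hQt ⟨ψ, hψ⟩
    simp only [ContinuousLinearMap.comp_apply, ContinuousLinearMap.coprod_apply,
      ContinuousLinearMap.coe_mk', map_add, map_sub, G] at this ⊢
    linarith

end LocallyConvex

theorem setOf_exists_eq_setOf_exists_sub_mem_map {X Y Z : Type*}
    [AddCommGroup X] [Module ℝ X] [TopologicalSpace X]
    [AddCommGroup Y] [Module ℝ Y] [TopologicalSpace Y]
    [AddCommGroup Z] [Module ℝ Z] [TopologicalSpace Z]
    (A₁ : X →L[ℝ] Z) (A₂ : Y →L[ℝ] Z) (z : Z) {m : ℕ} (xs : Fin m → X →L[ℝ] ℝ)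
    (ys : Fin m → Y →L[ℝ] ℝ) (β : Fin m → ℝ) {X₀ : Submodule ℝ X}
    (hX₀ : ∀ x ∈ X₀, ∀ i, xs i x = 0) {k : ℕ} (ι : (Fin k → ℝ) →ₗ[ℝ] X)
    (hι : ∀ x, ∃ t, x - ι t ∈ X₀) :
    {y : Y | ∃ x : X, A₁ x + A₂ y = z ∧ ∀ i, xs i x + ys i y ≤ β i} =
      {y | ∃ t, z - A₂ y - A₁ (ι t) ∈ X₀.map (A₁ : X →ₗ[ℝ] Z) ∧
        ∀ i, ys i y + xs i (ι t) ≤ β i} := by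
  ext y
  constructor
  · rintro ⟨x, rfl, hx⟩
    obtain ⟨t, ht⟩ := hι x
    have hxs : ∀ i, xs i x = xs i (ι t) := fun i => by
      simpa [sub_eq_zero] using hX₀ _ ht i
    refine ⟨t, ⟨x - ι t, ht, ?_⟩, fun i => ?_⟩
    · simp only [ContinuousLinearMap.coe_coe, map_sub]
      abel
    · linarith [hx i, hxs i]
  · rintro ⟨t, ⟨x₀, hx₀, hA⟩, hineq⟩
    rw [ContinuousLinearMap.coe_coe] at hA
    refine ⟨x₀ + ι t, ?_, fun i => ?_⟩
    · rw [map_add, hA]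
      abel
    · rw [map_add, hX₀ x₀ hx₀ i, zero_add, add_comm]
      exact hineq i

theorem rge_is_gpc_general
    {X Y Z : Type*}
    [AddCommGroup X] [Module ℝ X] [TopologicalSpace X]
    [AddCommGroup Y] [Module ℝ Y] [TopologicalSpace Y]
    [AddCommGroup Z] [Module ℝ Z] [TopologicalSpace Z] [IsTopologicalAddGroup Z]
    [ContinuousSMul ℝ Z] [LocallyConvexSpace ℝ Z]
    (A₁ : X →L[ℝ] Z) (A₂ : Y →L[ℝ] Z) (z : Z)
    {m : ℕ} (xs : Fin m → X →L[ℝ] ℝ) (ys : Fin m → Y →L[ℝ] ℝ) (β : Fin m → ℝ)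
    (hA₁ : ∀ X₀ : Submodule ℝ X, IsClosed (X₀ : Set X) →
      FiniteDimensional ℝ (X ⧸ X₀) → IsClosed (A₁ '' (X₀ : Set X))) :
    IsGPC {y : Y | ∃ x : X, A₁ x + A₂ y = z ∧ ∀ i, xs i x + ys i y ≤ β i} := by
  let f : X →L[ℝ] (Fin m → ℝ) := ContinuousLinearMap.pi xs
  let X₀ := LinearMap.ker (f : X →ₗ[ℝ] (Fin m → ℝ))
  have hX₀ : ∀ x ∈ X₀, ∀ i, xs i x = 0 := fun x hx i => congrFun (LinearMap.mem_ker.mp hx) i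
  have hX₀cofg : X₀.CoFG := Submodule.CoFG.ker _
  have hM : IsClosed (A₁ '' X₀) := hA₁ X₀ f.isClosed_ker hX₀cofg
  obtain ⟨k, ι, hι⟩ := X₀.exists_fin_linearMap_sub_mem
  rw [setOf_exists_eq_setOf_exists_sub_mem_map A₁ A₂ z xs ys β hX₀ ι hι]
  exact isGPC_setOf_exists_sub_mem (by simpa using hM) A₂ ((A₁ : X →ₗ[ℝ] Z) ∘ₗ ι) z
    (isPolyhedron_setOf_forall_le
      (fun i => (ys i).coprod ⟨(xs i : X →ₗ[ℝ] ℝ) ∘ₗ ι, LinearMap.continuous_on_pi _⟩) β)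

/-- If the graph of `F` is
`{(x,y) : A₁ x + A₂ y = z, ⟨xᵢ*,x⟩ + ⟨yᵢ*,y⟩ ≤ βᵢ}` and `A₁` maps every closed
finite-codimensional subspace of `X` onto a closed set, then `rge F` is a
generalized polyhedral convex set. -/
theorem rge_is_gpc
    {X Y Z : Type*}
    [AddCommGroup X] [Module ℝ X] [TopologicalSpace X] [IsTopologicalAddGroup X]
    [ContinuousSMul ℝ X] [LocallyConvexSpace ℝ X] [T2Space X]
    [AddCommGroup Y] [Module ℝ Y] [TopologicalSpace Y] [IsTopologicalAddGroup Y]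
    [ContinuousSMul ℝ Y] [LocallyConvexSpace ℝ Y] [T2Space Y]
    [AddCommGroup Z] [Module ℝ Z] [TopologicalSpace Z] [IsTopologicalAddGroup Z]
    [ContinuousSMul ℝ Z] [LocallyConvexSpace ℝ Z] [T2Space Z]
    (A₁ : X →L[ℝ] Z) (A₂ : Y →L[ℝ] Z) (z : Z)
    {m : ℕ} (xs : Fin m → X →L[ℝ] ℝ) (ys : Fin m → Y →L[ℝ] ℝ) (β : Fin m → ℝ)
    (hA₁ : ∀ X₀ : Submodule ℝ X, IsClosed (X₀ : Set X) →
      FiniteDimensional ℝ (X ⧸ X₀) → IsClosed (A₁ '' (X₀ : Set X))) :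
    IsGPC {y : Y | ∃ x : X, A₁ x + A₂ y = z ∧ ∀ i, xs i x + ys i y ≤ β i} :=
  rge_is_gpc_general A₁ A₂ z xs ys β hA₁
end

section
/- Let X and Y be Fréchet spaces and T : X → Y a surjective continuous linear map. If D ⊆ X is a polyhedral convex set, then T(D) is a polyhedral convex set in Y. -/
/-!
The open mapping theorem for F-spaces (Baire category plus successive approximation, as for
Banach spaces) makes `T` a quotient map. A set `A ⊆ Y` is then polyhedral as soon as `T ⁻¹' A`
is: the functionals cutting out a nonempty `T ⁻¹' A` are bounded above on the lines `x + ℝ k`,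
`k ∈ ker T`, hence vanish on `ker T` and factor continuously through `T`.
Here `T ⁻¹' (T '' D) = D + ker T`. Writing `D = Φ ⁻¹' Q` for `Φ : X → ℝⁿ` and a box `Q`, we get
`D + ker T = Φ ⁻¹' (Q + Φ (ker T))`, and `Q + L` is polyhedral for the finite-dimensional
subspace `L = Φ (ker T)` by Fourier–Motzkin elimination, one spanning vector at a time.
-/

/-- A set is polyhedral convex if it is a finite intersection of half-spaces
given by continuous linear functionals. -/
def IsPolyhedralConvex {E : Type*} [AddCommGroup E] [Module ℝ E] [TopologicalSpace E]
    (D : Set E) : Prop :=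
  ∃ (n : ℕ) (f : Fin n → E →L[ℝ] ℝ) (α : Fin n → ℝ),
    D = {x | ∀ i, f i x ≤ α i}

open Filter Set Topology Pointwise Function

section NestedNhds

variable {G : Type*} [AddCommGroup G]

theorem exists_hasAntitoneBasis_nhds_zero_add_subset [TopologicalSpace G]
    [IsTopologicalAddGroup G] [FirstCountableTopology G] {U : Set G} (hU : U ∈ 𝓝 0) :
    ∃ V : ℕ → Set G, (𝓝 0).HasAntitoneBasis V ∧ V 0 + V 0 ⊆ U ∧
      (∀ n, -V n = V n) ∧ ∀ n, V (n + 1) + V (n + 1) ⊆ V n := by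
  obtain ⟨b, hb⟩ := (𝓝 (0 : G)).exists_antitone_basis
  choose! φ hφ using fun (S : Set G) (hS : S ∈ 𝓝 0) (n : ℕ) =>
    exists_closed_nhds_zero_neg_eq_add_subset (inter_mem hS (hb.mem n))
  let W : ℕ → Set G := fun n => Nat.rec U (fun n S => φ S n) n
  have hW : ∀ n, W n ∈ 𝓝 0 := by
    intro n
    induction n with
    | zero => exact hU
    | succ n ih => exact (hφ _ ih n).1
  have hWstep : ∀ n, -W (n + 1) = W (n + 1) ∧ W (n + 1) + W (n + 1) ⊆ W n ∩ b n :=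
    fun n => (hφ _ (hW n) n).2.2
  have hWadd : ∀ n, W (n + 1) ⊆ W (n + 1) + W (n + 1) :=
    fun n => subset_add_left _ (mem_of_mem_nhds (hW (n + 1)))
  refine ⟨fun n => W (n + 1), ⟨?_, antitone_nat_of_succ_le fun n => ?_⟩,
    (hWstep 0).2.trans inter_subset_left, fun n => (hWstep n).1,
    fun n => (hWstep (n + 1)).2.trans inter_subset_left⟩
  · exact hb.toHasBasis.to_hasBasis'
      (fun n _ => ⟨n, trivial, (hWadd n).trans ((hWstep n).2.trans inter_subset_right)⟩)
      (fun n _ => hW (n + 1))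
  · exact (hWadd (n + 1)).trans ((hWstep (n + 1)).2.trans inter_subset_left)

variable {V : ℕ → Set G} {s : ℕ → G}

theorem sub_mem_add_self_of_succ_sub_mem (hV : ∀ n, V (n + 1) + V (n + 1) ⊆ V n)
    (hV0 : ∀ n, (0 : G) ∈ V n) (hs : ∀ n, s (n + 1) - s n ∈ V n) (N k : ℕ) :
    s (N + k) - s N ∈ V N + V N := by
  induction k generalizing N with
  | zero => exact ⟨0, hV0 N, 0, hV0 N, by simp⟩
  | succ k ih =>
    have htail : s (N + 1 + k) - s (N + 1) ∈ V N := hV N (ih (N + 1))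
    have hsplit : s (N + (k + 1)) - s N = (s (N + 1 + k) - s (N + 1)) + (s (N + 1) - s N) := by
      rw [show N + (k + 1) = N + 1 + k by omega]
      abel
    exact hsplit ▸ add_mem_add htail (hs N)

theorem cauchySeq_of_succ_sub_mem [UniformSpace G] [IsUniformAddGroup G]
    (hV : (𝓝 0).HasAntitoneBasis V) (hneg : ∀ n, -V n = V n)
    (hadd : ∀ n, V (n + 1) + V (n + 1) ⊆ V n) (hs : ∀ n, s (n + 1) - s n ∈ V n) :
    CauchySeq s := by
  have hV0 : ∀ n, (0 : G) ∈ V n := fun n => mem_of_mem_nhds (hV.mem n)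
  refine (IsUniformAddGroup.cauchy_map_iff_tendsto _ _).2
    ⟨atTop_neBot, hV.toHasBasis.tendsto_right_iff.2 fun i _ => ?_⟩
  have hfar : ∀ m ≥ i + 2, s m - s (i + 2) ∈ V (i + 1) := fun m hm => by
    obtain ⟨k, rfl⟩ := Nat.exists_eq_add_of_le hm
    exact hadd (i + 1) (sub_mem_add_self_of_succ_sub_mem hadd hV0 hs (i + 2) k)
  filter_upwards [tendsto_fst.eventually (eventually_ge_atTop (i + 2)),
    tendsto_snd.eventually (eventually_ge_atTop (i + 2))] with p hp₁ hp₂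
  have hneg₂ : -(s p.2 - s (i + 2)) ∈ V (i + 1) := by
    rw [← hneg]
    exact neg_mem_neg.2 (hfar _ hp₂)
  have hsplit : s p.1 - s p.2 = (s p.1 - s (i + 2)) + -(s p.2 - s (i + 2)) := by abel
  exact hsplit ▸ hadd i (add_mem_add (hfar _ hp₁) hneg₂)

end NestedNhds

section OpenMapping

variable {X Y : Type*} [AddCommGroup X] [AddCommGroup Y] [TopologicalSpace Y]
  [IsTopologicalAddGroup Y]

theorem exists_mem_sub_mem_of_mem_closure {A B : Set Y} {z : Y} (hz : z ∈ closure A)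
    (hB : B ∈ 𝓝 0) : ∃ a ∈ A, z - a ∈ B := by
  have : (z - ·) ⁻¹' B ∈ 𝓝 z :=
    (continuous_const.sub continuous_id).continuousAt.preimage_mem_nhds (by simpa using hB)
  obtain ⟨a, hzB, ha⟩ := mem_closure_iff_nhds.1 hz _ this
  exact ⟨a, ha, hzB⟩

theorem exists_seq_sub_mem_closure_image {f : X →+ Y} {V : ℕ → Set X} {y : Y}
    (hy : y ∈ closure (f '' V 0)) (hV : ∀ n, closure (f '' V n) ∈ 𝓝 0) :
    ∃ s : ℕ → X, s 0 = 0 ∧ (∀ n, s (n + 1) - s n ∈ V n) ∧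
      ∀ n, y - f (s n) ∈ closure (f '' V n) := by
  choose! ξ hξV hξ using fun n x (hx : y - f x ∈ closure (f '' V n)) =>
    exists_mem_image.1 (exists_mem_sub_mem_of_mem_closure hx (hV (n + 1)))
  let s : ℕ → X := fun n => Nat.rec 0 (fun n x => x + ξ n x) n
  have hs : ∀ n, y - f (s n) ∈ closure (f '' V n) := by
    intro n
    induction n with
    | zero => simpa [s] using hy
    | succ n ih => simpa [s, sub_sub] using hξ n (s n) ih
  exact ⟨s, rfl, fun n => by simpa [s] using hξV n (s n) (hs n), hs⟩

theorem tendsto_zero_of_mem_closure_image [TopologicalSpace X] {f : X →+ Y} (hf : Continuous f)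
    {V : ℕ → Set X} (hV : (𝓝 0).HasAntitoneBasis V) {u : ℕ → Y}
    (hu : ∀ n, u n ∈ closure (f '' V n)) : Tendsto u atTop (𝓝 0) := by
  refine (closed_nhds_basis 0).tendsto_right_iff.2 fun W ⟨hW, hWc⟩ => ?_
  have hfW : f ⁻¹' W ∈ 𝓝 0 := hf.continuousAt.preimage_mem_nhds (by simpa using hW)
  filter_upwards [hV.eventually_subset hfW] with n hn
  exact closure_minimal (image_subset_iff.2 hn) hWc (hu n)

theorem AddMonoidHom.isOpenMap_of_closure_image_mem_nhds [UniformSpace X] [IsUniformAddGroup X]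
    [CompleteSpace X] [FirstCountableTopology X] [T2Space Y] {f : X →+ Y} (hf : Continuous f)
    (h : ∀ V ∈ 𝓝 (0 : X), closure (f '' V) ∈ 𝓝 0) : IsOpenMap f := by
  refine IsTopologicalAddGroup.isOpenMap_iff_nhds_zero.2 <| le_map_iff.2 fun U hU => ?_
  obtain ⟨C, hC, hCc, hCU⟩ := exists_mem_nhds_isClosed_subset hU
  obtain ⟨V, hV, hVC, hneg, hadd⟩ := exists_hasAntitoneBasis_nhds_zero_add_subset hC
  refine mem_of_superset (h _ (hV.mem 0)) fun y hy => ?_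
  obtain ⟨s, hs0, hds, hys⟩ := exists_seq_sub_mem_closure_image hy fun n => h _ (hV.mem n)
  obtain ⟨x, hx⟩ := cauchySeq_tendsto_of_complete (cauchySeq_of_succ_sub_mem hV hneg hadd hds)
  have hsC : ∀ n, s n ∈ C := fun n => hVC <| by
    simpa [hs0] using sub_mem_add_self_of_succ_sub_mem hadd
      (fun n => mem_of_mem_nhds (hV.mem n)) hds 0 n
  have hlim : Tendsto (fun n => y - f (s n)) atTop (𝓝 (y - f x)) :=
    tendsto_const_nhds.sub ((hf.tendsto x).comp hx)
  have hyx : y - f x = 0 :=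
    tendsto_nhds_unique hlim (tendsto_zero_of_mem_closure_image hf hV hys)
  exact ⟨x, hCU (hCc.mem_of_tendsto hx (Eventually.of_forall hsC)), (sub_eq_zero.1 hyx).symm⟩

theorem closure_image_mem_nhds_zero_of_surjective [Module ℝ X] [TopologicalSpace X]
    [IsTopologicalAddGroup X] [ContinuousSMul ℝ X] [Module ℝ Y] [ContinuousConstSMul ℝ Y]
    [BaireSpace Y] {T : X →ₗ[ℝ] Y} (hT : Surjective T) {V : Set X} (hV : V ∈ 𝓝 0) :
    closure (T '' V) ∈ 𝓝 0 := by
  obtain ⟨W, hW, hWV⟩ := exists_nhds_half_neg hV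
  have hcover : ⋃ n : ℕ, closure (((n : ℝ) + 1) • (T '' W)) = univ := by
    refine eq_univ_of_forall fun y => ?_
    obtain ⟨x, rfl⟩ := hT y
    obtain ⟨r, -, hr⟩ := (absorbent_nhds_zero (𝕜 := ℝ) hW x).exists_pos
    obtain ⟨n, hn⟩ := exists_nat_ge r
    obtain ⟨w, hw, hwx⟩ := hr ((n : ℝ) + 1) (by rw [Real.norm_of_nonneg (by positivity)]; linarith)
      (mem_singleton x)
    exact mem_iUnion.2 ⟨n, subset_closure ⟨T w, mem_image_of_mem T hw, by rw [← hwx, map_smul]⟩⟩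
  obtain ⟨n, hn⟩ := nonempty_interior_of_iUnion_of_closed (fun _ => isClosed_closure) hcover
  have hn0 : (n : ℝ) + 1 ≠ 0 := by positivity
  rw [closure_smul₀' hn0, interior_smul₀ hn0, smul_set_nonempty] at hn
  obtain ⟨y₀, hy₀⟩ := hn
  have hnhds : (· - y₀) '' interior (closure (T '' W)) ∈ 𝓝 0 := by
    simpa using (isOpenMap_sub_right y₀).image_mem_nhds (isOpen_interior.mem_nhds hy₀)
  refine mem_of_superset hnhds ?_
  rintro _ ⟨z, hz, rfl⟩
  refine map_mem_closure₂ continuous_sub (interior_subset hz) (interior_subset hy₀) ?_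
  rintro _ ⟨u, hu, rfl⟩ _ ⟨v, hv, rfl⟩
  exact ⟨u - v, hWV u hu v hv, map_sub T u v⟩

instance IsUniformAddGroup.baireSpace {G : Type*} [AddGroup G] [UniformSpace G]
    [IsUniformAddGroup G] [FirstCountableTopology G] [CompleteSpace G] : BaireSpace G :=
  have := IsUniformAddGroup.uniformity_countably_generated (α := G)
  BaireSpace.of_completelyPseudoMetrizable

theorem ContinuousLinearMap.isOpenMap_of_completeSpace_of_baireSpace [Module ℝ X]
    [UniformSpace X] [IsUniformAddGroup X] [ContinuousSMul ℝ X] [CompleteSpace X]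
    [FirstCountableTopology X] [Module ℝ Y] [ContinuousConstSMul ℝ Y] [BaireSpace Y]
    [T2Space Y] (T : X →L[ℝ] Y) (hT : Surjective T) : IsOpenMap T :=
  (T : X →+ Y).isOpenMap_of_closure_image_mem_nhds T.continuous fun _ hV =>
    closure_image_mem_nhds_zero_of_surjective (T := (T : X →ₗ[ℝ] Y)) hT hV

end OpenMapping

theorem exists_mem_upperBounds_lowerBounds_of_finite {α : Type*}
    [ConditionallyCompleteLinearOrder α] [Nonempty α] {L U : Set α} (hL : L.Finite)
    (hU : U.Finite) (h : ∀ l ∈ L, ∀ u ∈ U, l ≤ u) : (upperBounds L ∩ lowerBounds U).Nonempty := by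
  rcases L.eq_empty_or_nonempty with rfl | hL₀
  · rcases U.eq_empty_or_nonempty with rfl | hU₀
    · simp
    · exact ⟨sInf U, by simp, fun u hu => csInf_le hU.bddBelow hu⟩
  · exact ⟨sSup L, fun l hl => le_csSup hL.bddAbove hl,
      fun u hu => csSup_le hL₀ fun l hl => h l hl u hu⟩

/-- Fourier–Motzkin elimination of the variable `t`. -/
theorem exists_forall_le_mul_iff {ι : Type*} [Finite ι] (u c : ι → ℝ) :
    (∃ t, ∀ i, u i ≤ t * c i) ↔
      (∀ i, c i = 0 → u i ≤ 0) ∧ ∀ i j, 0 < c i → c j < 0 → c i * u j ≤ c j * u i := by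
  constructor
  · rintro ⟨t, ht⟩
    refine ⟨fun i hi => by simpa [hi] using ht i, fun i j hi hj => ?_⟩
    nlinarith [ht i, ht j]
  · rintro ⟨hzero, hpair⟩
    obtain ⟨t, hlow, hup⟩ := exists_mem_upperBounds_lowerBounds_of_finite
      ((toFinite {i | 0 < c i}).image fun i => u i / c i)
      ((toFinite {j | c j < 0}).image fun j => u j / c j) <| by
        rintro _ ⟨i, hi, rfl⟩ _ ⟨j, hj, rfl⟩
        change u i / c i ≤ u j / c j
        rw [le_div_iff_of_neg hj, div_mul_eq_mul_div, le_div_iff₀ hi]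
        linarith [hpair i j hi hj]
    refine ⟨t, fun i => ?_⟩
    rcases lt_trichotomy (c i) 0 with h | h | h
    · exact (le_div_iff_of_neg h).1 (hup ⟨i, h, rfl⟩)
    · simpa [h] using hzero i h
    · exact (div_le_iff₀ h).1 (hlow ⟨i, h, rfl⟩)

theorem eq_zero_of_forall_add_mul_le {a b c : ℝ} (h : ∀ t : ℝ, a + t * b ≤ c) : b = 0 := by
  by_contra hb
  have := h ((c - a + 1) / b)
  rw [div_mul_cancel₀ _ hb] at this
  linarith

section LinearMaps

variable {R M N : Type*} [Ring R] [AddCommGroup M] [Module R M] [AddCommGroup N] [Module R N]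

theorem LinearMap.preimage_add_map (F : M →ₗ[R] N) (Q : Set N) (K : Submodule R M) :
    F ⁻¹' (Q + (K.map F : Set N)) = F ⁻¹' Q + (K : Set M) := by
  ext x
  constructor
  · rintro ⟨q, hq, _, ⟨k, hk, rfl⟩, hx⟩
    refine ⟨x - k, ?_, k, hk, sub_add_cancel x k⟩
    rwa [mem_preimage, map_sub, ← hx, add_sub_cancel_right]
  · rintro ⟨d, hd, k, hk, rfl⟩
    exact ⟨F d, hd, F k, ⟨k, hk, rfl⟩, (map_add F d k).symm⟩

theorem LinearMap.preimage_image_eq_add_ker (F : M →ₗ[R] N) (s : Set M) :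
    F ⁻¹' (F '' s) = s + (LinearMap.ker F : Set M) := by
  ext x
  constructor
  · rintro ⟨d, hd, hdx⟩
    exact ⟨d, hd, x - d, by simp [hdx], add_sub_cancel d x⟩
  · rintro ⟨d, hd, k, hk, rfl⟩
    exact ⟨d, hd, by simp [LinearMap.mem_ker.1 hk]⟩

theorem ContinuousLinearMap.exists_comp_eq_of_ker_le {Z : Type*} [TopologicalSpace M]
    [TopologicalSpace N] [AddCommGroup Z] [Module R Z] [TopologicalSpace Z] {T : M →L[R] N}
    (hT : IsQuotientMap T) {g : M →L[R] Z}
    (hg : LinearMap.ker (T : M →ₗ[R] N) ≤ LinearMap.ker (g : M →ₗ[R] Z)) :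
    ∃ h : N →L[R] Z, ∀ x, h (T x) = g x := by
  let e := (T : M →ₗ[R] N).quotKerEquivOfSurjective hT.surjective
  let h : N →ₗ[R] Z := (LinearMap.ker (T : M →ₗ[R] N)).liftQ g hg ∘ₗ e.symm.toLinearMap
  have hh : ∀ x, h (T x) = g x := fun x => by
    have : e.symm (T x) = Submodule.Quotient.mk x := by
      rw [LinearEquiv.symm_apply_eq, LinearMap.quotKerEquivOfSurjective_apply_mk]
      rfl
    simp [h, this]
  refine ⟨⟨h, hT.continuous_iff.2 ?_⟩, hh⟩
  simpa [Function.comp_def, hh] using g.continuous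

end LinearMaps

section Polyhedral

variable {E F : Type*} [AddCommGroup E] [Module ℝ E] [TopologicalSpace E]
  [AddCommGroup F] [Module ℝ F] [TopologicalSpace F]

theorem isPolyhedralConvex_setOf_forall_le {ι : Type*} [Finite ι] (f : ι → E →L[ℝ] ℝ)
    (α : ι → ℝ) : IsPolyhedralConvex {x : E | ∀ i, f i x ≤ α i} := by
  obtain ⟨n, ⟨e⟩⟩ := Finite.exists_equiv_fin ι
  exact ⟨n, f ∘ e.symm, α ∘ e.symm, ext fun x => e.symm.surjective.forall⟩

theorem isPolyhedralConvex_empty : IsPolyhedralConvex (∅ : Set E) := by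
  convert isPolyhedralConvex_setOf_forall_le (fun _ : Unit => (0 : E →L[ℝ] ℝ)) fun _ => -1
  ext x
  simp

theorem IsPolyhedralConvex.inter {D D' : Set E} (hD : IsPolyhedralConvex D)
    (hD' : IsPolyhedralConvex D') : IsPolyhedralConvex (D ∩ D') := by
  obtain ⟨n, f, α, rfl⟩ := hD
  obtain ⟨m, g, β, rfl⟩ := hD'
  convert isPolyhedralConvex_setOf_forall_le (Sum.elim f g) (Sum.elim α β) using 1
  ext x
  simp [Sum.forall]

theorem IsPolyhedralConvex.preimage {D : Set F} (hD : IsPolyhedralConvex D) (T : E →L[ℝ] F) :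
    IsPolyhedralConvex (T ⁻¹' D) := by
  obtain ⟨n, f, α, rfl⟩ := hD
  exact ⟨n, fun i => (f i).comp T, α, rfl⟩

theorem IsPolyhedralConvex.add_span_singleton {D : Set E} (hD : IsPolyhedralConvex D) (z : E) :
    IsPolyhedralConvex (D + (ℝ ∙ z : Set E)) := by
  obtain ⟨n, f, α, rfl⟩ := hD
  have hline : {x | ∀ i, f i x ≤ α i} + (ℝ ∙ z : Set E) =
      {x | ∃ t : ℝ, ∀ i, f i x - α i ≤ t * f i z} := by
    ext x
    simp only [Set.mem_add, SetLike.mem_coe, Submodule.mem_span_singleton, mem_ofPred_eq]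
    constructor
    · rintro ⟨d, hd, _, ⟨t, rfl⟩, rfl⟩
      exact ⟨t, fun i => by simp; linarith [hd i]⟩
    · rintro ⟨t, ht⟩
      exact ⟨x - t • z, fun i => by simp; linarith [ht i], t • z, ⟨t, rfl⟩, sub_add_cancel _ _⟩
  have helim : {x | ∃ t : ℝ, ∀ i, f i x - α i ≤ t * f i z} =
      {x | ∀ i : {i // f i z = 0}, f i x ≤ α i} ∩
      {x | ∀ p : {p : Fin n × Fin n // 0 < f p.1 z ∧ f p.2 z < 0},
        (f p.1.1 z • f p.1.2 - f p.1.2 z • f p.1.1) x ≤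
          f p.1.1 z * α p.1.2 - f p.1.2 z * α p.1.1} := by
    ext x
    simp only [mem_ofPred_eq, exists_forall_le_mul_iff, mem_inter_iff, Subtype.forall,
      Prod.forall]
    refine and_congr (forall₂_congr fun i _ => sub_nonpos) (forall₂_congr fun i j => ?_)
    simp only [sub_apply, smul_apply, smul_eq_mul]
    constructor
    · intro h hij
      linarith [h hij.1 hij.2]
    · intro h hi hj
      linarith [h ⟨hi, hj⟩]
  rw [hline, helim]
  exact (isPolyhedralConvex_setOf_forall_le _ _).inter (isPolyhedralConvex_setOf_forall_le _ _)

theorem IsPolyhedralConvex.add_submodule_of_fg {D : Set E} (hD : IsPolyhedralConvex D)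
    {K : Submodule ℝ E} (hK : K.FG) : IsPolyhedralConvex (D + (K : Set E)) := by
  induction K, hK using Submodule.fg_induction generalizing D with
  | singleton z => exact hD.add_span_singleton z
  | sup K₁ K₂ _ _ ih₁ ih₂ =>
    rw [Submodule.coe_sup, ← add_assoc]
    exact ih₂ (ih₁ hD)

theorem IsPolyhedralConvex.add_submodule {D : Set E} (hD : IsPolyhedralConvex D)
    (K : Submodule ℝ E) : IsPolyhedralConvex (D + (K : Set E)) := by
  obtain ⟨n, f, α, rfl⟩ := hD
  let Φ : E →L[ℝ] (Fin n → ℝ) := ContinuousLinearMap.pi f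
  have hQ : IsPolyhedralConvex {v : Fin n → ℝ | ∀ i, v i ≤ α i} :=
    isPolyhedralConvex_setOf_forall_le (fun i => ContinuousLinearMap.proj i) α
  have hQK := (hQ.add_submodule_of_fg (IsNoetherian.noetherian (K.map (Φ : E →ₗ[ℝ] _)))).preimage Φ
  rwa [← ContinuousLinearMap.coe_coe, LinearMap.preimage_add_map] at hQK

theorem IsPolyhedralConvex.of_preimage {T : E →L[ℝ] F} (hT : IsQuotientMap T) {A : Set F}
    (hA : IsPolyhedralConvex (T ⁻¹' A)) : IsPolyhedralConvex A := by
  obtain ⟨n, g, β, hgA⟩ := hA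
  rcases A.eq_empty_or_nonempty with rfl | ⟨y₀, hy₀⟩
  · exact isPolyhedralConvex_empty
  obtain ⟨x₀, rfl⟩ := hT.surjective y₀
  have hker : ∀ i, LinearMap.ker (T : E →ₗ[ℝ] F) ≤ LinearMap.ker (g i : E →ₗ[ℝ] ℝ) := by
    intro i k hk
    refine eq_zero_of_forall_add_mul_le (a := g i x₀) (c := β i) fun t => ?_
    have hTk : T k = 0 := hk
    have hx : x₀ + t • k ∈ T ⁻¹' A := by simpa [hTk] using hy₀
    rw [hgA] at hx
    simpa using hx i
  choose h hh using fun i => ContinuousLinearMap.exists_comp_eq_of_ker_le hT (hker i)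
  refine ⟨n, h, β, ext fun y => ?_⟩
  obtain ⟨x, rfl⟩ := hT.surjective y
  simpa [hh] using Set.ext_iff.1 hgA x

end Polyhedral

theorem image_polyhedral_of_surjective_frechet_general
    {X Y : Type*}
    [AddCommGroup X] [Module ℝ X] [UniformSpace X] [IsUniformAddGroup X]
    [ContinuousSMul ℝ X] [CompleteSpace X]
    [FirstCountableTopology X]
    [AddCommGroup Y] [Module ℝ Y] [UniformSpace Y] [IsUniformAddGroup Y]
    [ContinuousSMul ℝ Y] [T2Space Y] [CompleteSpace Y]
    [FirstCountableTopology Y]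
    (T : X →L[ℝ] Y) (hT : Function.Surjective T)
    (D : Set X) (hD : IsPolyhedralConvex D) :
    IsPolyhedralConvex (T '' D) := by
  have hquot : IsQuotientMap T :=
    (T.isOpenMap_of_completeSpace_of_baireSpace hT).isQuotientMap T.continuous hT
  refine IsPolyhedralConvex.of_preimage hquot ?_
  rw [← ContinuousLinearMap.coe_coe, LinearMap.preimage_image_eq_add_ker]
  exact hD.add_submodule _

/-- A surjective continuous linear map between Fréchet spaces
maps polyhedral convex sets to polyhedral convex sets. -/
theorem image_polyhedral_of_surjective_frechet
    {X Y : Type*}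
    [AddCommGroup X] [Module ℝ X] [UniformSpace X] [IsUniformAddGroup X]
    [ContinuousSMul ℝ X] [LocallyConvexSpace ℝ X] [T2Space X] [CompleteSpace X]
    [FirstCountableTopology X]
    [AddCommGroup Y] [Module ℝ Y] [UniformSpace Y] [IsUniformAddGroup Y]
    [ContinuousSMul ℝ Y] [LocallyConvexSpace ℝ Y] [T2Space Y] [CompleteSpace Y]
    [FirstCountableTopology Y]
    (T : X →L[ℝ] Y) (hT : Function.Surjective T)
    (D : Set X) (hD : IsPolyhedralConvex D) :
    IsPolyhedralConvex (T '' D) :=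
  image_polyhedral_of_surjective_frechet_general T hT D hD
end
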